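/- Let 1 < m < 2 and ν > 0. Define p : ℝ → ℝ by p(x) = p₀ [1 − tanh²( ((2−m)/(2(m−1))) x )]^{(m−1)/(2−m)} with p₀ = (mν/(2(m−1)))^{(m−1)/(2−m)}. Then p is positive, even, continuously differentiable, tends to 0 as |x| → ∞, and satisfies the first-integral equation (1/2) p(x)² − (1/2) p'(x)² = ((m−1)/(mν)) p(x)^{m/(m−1)} for all x ∈ ℝ. Consequently ρ_∞ := p^{1/(m−1)}, i.e. ρ_∞(x) = (mν/(2(m−1)))^{1/(2−m)} [1 − tanh²( ((2−m)/(2(m−1))) x )]^{1/(2−m)}, with ρ_∞(0) = (mν/(2(m−1)))^{1/(2−m)}. -/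

import Mathlib

open Set Filter Real

/-- The explicit limiting profile `p(x) = p₀ [1 − tanh²(((2−m)/(2(m−1))) x)]^{(m−1)/(2−m)}`
with `p₀ = (mν/(2(m−1)))^{(m−1)/(2−m)}`, for the Bessel kernel in the regime `1 < m < 2`. -/
noncomputable def besselP (m ν x : ℝ) : ℝ :=
  (m * ν / (2 * (m - 1))) ^ ((m - 1) / (2 - m)) *
    (1 - Real.tanh ((2 - m) / (2 * (m - 1)) * x) ^ 2) ^ ((m - 1) / (2 - m))

/-!
Write `c = (2−m)/(2(m−1))`, `b = (m−1)/(2−m)` and `u = 1 − tanh²(c·)`, so that `p = K^b u^b`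
with `K = mν/(2(m−1))`. Since `tanh' = 1 − tanh²` and `2bc = 1`, we get `p' = −tanh(c·) p`,
hence `p² − p'² = p² u`. On the other hand `p^{1/b} = K u`, so
`p^{m/(m−1)} = p^{2 + 1/b} = K p² u`, and `K (m−1)/(mν) = 1/2` gives the first integral.
Decay follows from `1 − tanh² = cosh⁻²`.
-/

namespace Real

theorem one_sub_tanh_sq (x : ℝ) : 1 - tanh x ^ 2 = (cosh x ^ 2)⁻¹ := by
  have hc : cosh x ≠ 0 := (cosh_pos x).ne'
  rw [tanh_eq_sinh_div_cosh]
  field_simp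
  linarith [cosh_sq_sub_sinh_sq x]

theorem one_sub_tanh_sq_pos (x : ℝ) : 0 < 1 - tanh x ^ 2 := by
  rw [one_sub_tanh_sq]
  positivity

theorem tanh_eq_sinh_div_cosh_fun : tanh = fun x => sinh x / cosh x :=
  funext tanh_eq_sinh_div_cosh

theorem hasDerivAt_tanh (x : ℝ) : HasDerivAt tanh (1 - tanh x ^ 2) x := by
  have h := (hasDerivAt_sinh x).div (hasDerivAt_cosh x) (cosh_pos x).ne'
  rw [tanh_eq_sinh_div_cosh_fun]
  refine h.congr_deriv ?_
  rw [← tanh_eq_sinh_div_cosh_fun, one_sub_tanh_sq]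
  field_simp
  exact cosh_sq_sub_sinh_sq x

theorem contDiff_tanh {n : WithTop ℕ∞} : ContDiff ℝ n tanh := by
  rw [tanh_eq_sinh_div_cosh_fun]
  exact contDiff_sinh.div contDiff_cosh fun x => (cosh_pos x).ne'

theorem tendsto_cosh_atTop : Tendsto cosh atTop atTop := by
  refine tendsto_atTop_mono (fun x => ?_) (tendsto_exp_atTop.atTop_div_const two_pos)
  rw [cosh_eq]
  linarith [exp_pos (-x)]

theorem tendsto_one_sub_tanh_sq_atTop : Tendsto (fun x => 1 - tanh x ^ 2) atTop (nhds 0) := by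
  simp only [one_sub_tanh_sq]
  exact tendsto_inv_atTop_zero.comp ((tendsto_pow_atTop two_ne_zero).comp tendsto_cosh_atTop)

end Real

theorem hasDerivAt_one_sub_tanh_sq_rpow (b c x : ℝ) :
    HasDerivAt (fun x => (1 - tanh (c * x) ^ 2) ^ b)
      (-(2 * b * c) * tanh (c * x) * (1 - tanh (c * x) ^ 2) ^ b) x := by
  have hu := one_sub_tanh_sq_pos (c * x)
  have hlin : HasDerivAt (fun y => c * y) c x := by
    simpa using (hasDerivAt_id x).const_mul c
  have htanh : HasDerivAt (fun y => tanh (c * y)) ((1 - tanh (c * x) ^ 2) * c) x :=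
    (hasDerivAt_tanh (c * x)).comp x hlin
  refine (((htanh.pow 2).const_sub 1).rpow_const (p := b) (Or.inl hu.ne')).congr_deriv ?_
  simp only [Pi.pow_apply, Nat.cast_ofNat]
  rw [rpow_sub_one hu.ne']
  field_simp
  ring

theorem contDiff_one_sub_tanh_sq_rpow (b c : ℝ) {n : WithTop ℕ∞} :
    ContDiff ℝ n (fun x => (1 - tanh (c * x) ^ 2) ^ b) :=
  ContDiff.rpow_const_of_ne
    (contDiff_const.sub ((contDiff_tanh.comp (contDiff_const.mul contDiff_id)).pow 2))
    fun x => (one_sub_tanh_sq_pos (c * x)).ne'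

theorem tendsto_one_sub_tanh_sq_rpow_atTop {b c : ℝ} (hb : 0 < b) (hc : 0 < c) :
    Tendsto (fun x => (1 - tanh (c * x) ^ 2) ^ b) atTop (nhds 0) := by
  have hrpow : Tendsto (fun t : ℝ => t ^ b) (nhds 0) (nhds 0) := by
    simpa [zero_rpow hb.ne'] using (continuousAt_rpow_const 0 b (Or.inr hb.le)).tendsto
  exact hrpow.comp (tendsto_one_sub_tanh_sq_atTop.comp (tendsto_id.const_mul_atTop hc))

section besselP

variable {m ν : ℝ}

theorem besselP_pos (hm : 1 < m) (hν : 0 < ν) (x : ℝ) : 0 < besselP m ν x := by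
  have hK : 0 < m * ν / (2 * (m - 1)) := by
    apply div_pos <;> nlinarith
  have := one_sub_tanh_sq_pos ((2 - m) / (2 * (m - 1)) * x)
  unfold besselP
  positivity

theorem besselP_neg (m ν x : ℝ) : besselP m ν (-x) = besselP m ν x := by
  simp only [besselP, mul_neg, tanh_neg, neg_sq]

theorem contDiff_besselP (m ν : ℝ) {n : WithTop ℕ∞} : ContDiff ℝ n (besselP m ν) :=
  contDiff_const.mul (contDiff_one_sub_tanh_sq_rpow _ _)

theorem tendsto_besselP_atTop (hm1 : 1 < m) (hm2 : m < 2) :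
    Tendsto (besselP m ν) atTop (nhds 0) := by
  have hb : 0 < (m - 1) / (2 - m) := div_pos (by linarith) (by linarith)
  have hc : 0 < (2 - m) / (2 * (m - 1)) := div_pos (by linarith) (by linarith)
  have h := (tendsto_one_sub_tanh_sq_rpow_atTop hb hc).const_mul
    ((m * ν / (2 * (m - 1))) ^ ((m - 1) / (2 - m)))
  rw [mul_zero] at h
  exact h

theorem tendsto_besselP_atBot (hm1 : 1 < m) (hm2 : m < 2) :
    Tendsto (besselP m ν) atBot (nhds 0) :=
  ((tendsto_besselP_atTop hm1 hm2).comp tendsto_neg_atBot_atTop).congr fun x => besselP_neg m ν x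

theorem hasDerivAt_besselP (hm1 : m ≠ 1) (hm2 : m ≠ 2) (x : ℝ) :
    HasDerivAt (besselP m ν) (-tanh ((2 - m) / (2 * (m - 1)) * x) * besselP m ν x) x := by
  have hbc : 2 * ((m - 1) / (2 - m)) * ((2 - m) / (2 * (m - 1))) = 1 := by
    field_simp [sub_ne_zero.mpr hm1, sub_ne_zero.mpr hm2.symm]
  refine ((hasDerivAt_one_sub_tanh_sq_rpow _ _ x).const_mul
    ((m * ν / (2 * (m - 1))) ^ ((m - 1) / (2 - m)))).congr_deriv ?_
  rw [hbc, besselP]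
  ring

theorem besselP_rpow (hm : 1 < m) (hν : 0 ≤ ν) (x s : ℝ) :
    besselP m ν x ^ s = (m * ν / (2 * (m - 1))) ^ ((m - 1) / (2 - m) * s) *
      (1 - tanh ((2 - m) / (2 * (m - 1)) * x) ^ 2) ^ ((m - 1) / (2 - m) * s) := by
  have hK : 0 ≤ m * ν / (2 * (m - 1)) := by
    apply div_nonneg <;> nlinarith
  have hu := (one_sub_tanh_sq_pos ((2 - m) / (2 * (m - 1)) * x)).le
  rw [besselP, mul_rpow (rpow_nonneg hK _) (rpow_nonneg hu _), ← rpow_mul hK, ← rpow_mul hu]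

theorem besselP_first_integral (hm1 : 1 < m) (hm2 : m < 2) (hν : 0 < ν) (x : ℝ) :
    (1 / 2) * besselP m ν x ^ 2 - (1 / 2) * deriv (besselP m ν) x ^ 2
      = ((m - 1) / (m * ν)) * besselP m ν x ^ (m / (m - 1)) := by
  have hm1' : m - 1 ≠ 0 := by linarith
  have hm2' : 2 - m ≠ 0 := by linarith
  have hexp : m / (m - 1) = 2 + (2 - m) / (m - 1) := by
    field_simp
    ring
  have hb : (m - 1) / (2 - m) * ((2 - m) / (m - 1)) = 1 := by
    field_simp
  rw [(hasDerivAt_besselP (by linarith) (by linarith) x).deriv, hexp,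
    rpow_add (besselP_pos hm1 hν x), rpow_two, besselP_rpow hm1 hν.le, hb, rpow_one, rpow_one]
  have hν' : ν ≠ 0 := hν.ne'
  have hm : m ≠ 0 := by linarith
  field_simp

theorem besselP_rpow_one_div_sub_one (hm : 1 < m) (hν : 0 ≤ ν) (x : ℝ) :
    besselP m ν x ^ (1 / (m - 1)) = (m * ν / (2 * (m - 1))) ^ (1 / (2 - m)) *
      (1 - tanh ((2 - m) / (2 * (m - 1)) * x) ^ 2) ^ (1 / (2 - m)) := by
  have hexp : (m - 1) / (2 - m) * (1 / (m - 1)) = 1 / (2 - m) := by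
    rw [div_mul_div_comm, mul_one, mul_comm, div_mul_cancel_left₀ (sub_ne_zero.mpr hm.ne'), one_div]
  rw [besselP_rpow hm hν, hexp]

end besselP

/-- For `1 < m < 2` and `ν > 0`, the explicit profile `p = besselP m ν` is positive,
even, `C¹`, decays to `0` at infinity, and satisfies the first-integral equation
`(1/2)p² − (1/2)p'² = ((m−1)/(mν)) p^{m/(m−1)}`; consequently
`ρ_∞ = p^{1/(m−1)}` is given by the stated explicit formula, with
`ρ_∞(0) = (mν/(2(m−1)))^{1/(2−m)}`. -/
theorem bessel_limiting_profile
    (m ν : ℝ) (hm1 : 1 < m) (hm2 : m < 2) (hν : 0 < ν) :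
    (∀ x, 0 < besselP m ν x) ∧
    (∀ x, besselP m ν (-x) = besselP m ν x) ∧
    ContDiff ℝ 1 (besselP m ν) ∧
    Tendsto (besselP m ν) atTop (nhds 0) ∧
    Tendsto (besselP m ν) atBot (nhds 0) ∧
    (∀ x, (1 / 2) * besselP m ν x ^ 2 - (1 / 2) * deriv (besselP m ν) x ^ 2
        = ((m - 1) / (m * ν)) * besselP m ν x ^ (m / (m - 1))) ∧
    (∀ x, besselP m ν x ^ (1 / (m - 1)) =
        (m * ν / (2 * (m - 1))) ^ (1 / (2 - m)) *
          (1 - Real.tanh ((2 - m) / (2 * (m - 1)) * x) ^ 2) ^ (1 / (2 - m))) ∧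
    besselP m ν 0 ^ (1 / (m - 1)) = (m * ν / (2 * (m - 1))) ^ (1 / (2 - m)) := by
  refine ⟨besselP_pos hm1 hν, besselP_neg m ν, contDiff_besselP m ν,
    tendsto_besselP_atTop hm1 hm2, tendsto_besselP_atBot hm1 hm2,
    besselP_first_integral hm1 hm2 hν, besselP_rpow_one_div_sub_one hm1 hν.le, ?_⟩
  simpa using besselP_rpow_one_div_sub_one hm1 hν.le 0
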